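/- arXiv:2202.09600 — 3 statements merged into one kernel-verified Lean document; each statement's English description precedes it below -/
import Mathlib

section
/- Let (R, F) be a tamely filtered k-algebra, meaning F is a decreasing multiplicative Z-filtration with F^{≥0}R = R and F^{≥m}R = F^{≥1}R for all m ≥ 1. Then the Rees algebra ⊕_m F^{≥m}R (with F^{≥m}R placed in degree m, summing over all m ∈ Z with F^{≥m}R = R for m ≤ 0) is a finitely generated k-algebra if and only if R is a finitely generated k-algebra and the ideal F^{≥1}R ⊆ R is idempotent. -/
/-- The Rees algebra `⊕ₘ F^{≥m}R ⊆ R[t, t⁻¹]` of the *tame* filtration on `R` associated to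
an ideal `I`: `F^{≥m}R = R` for `m ≤ 0` and `F^{≥m}R = I` for `m ≥ 1`.  It is realized as
the `k`-subalgebra of the Laurent polynomial ring `AddMonoidAlgebra R ℤ` of elements whose
coefficients in positive degrees lie in `I`. -/
def tameRees (k R : Type*) [CommSemiring k] [CommRing R] [Algebra k R] (I : Ideal R) :
    Subalgebra k (AddMonoidAlgebra R ℤ) where
  carrier := {p | ∀ m : ℤ, 0 < m → p.coeff m ∈ I}
  add_mem' {p q} hp hq m hm := by
    simpa [AddMonoidAlgebra.coeff_add] using I.add_mem (hp m hm) (hq m hm)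
  mul_mem' {p q} hp hq m hm := by
    classical
    rw [AddMonoidAlgebra.coeff_mul]
    refine Submodule.sum_mem _ fun a₁ ha₁ => Submodule.sum_mem _ fun a₂ ha₂ => ?_
    by_cases h : a₁ + a₂ = m
    · rcases lt_or_ge 0 a₁ with h1 | h1
      · simpa [h] using Ideal.mul_mem_right _ I (hp a₁ h1)
      · have h2 : 0 < a₂ := by omega
        simpa [h] using Ideal.mul_mem_left _ _ (hq a₂ h2)
    · simp [h]
  algebraMap_mem' c m hm := by
    have h1 : (algebraMap k (AddMonoidAlgebra R ℤ) c).coeff m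
        = Finsupp.single (0 : ℤ) (algebraMap k R c) m := by
      first | (rw [AddMonoidAlgebra.coe_algebraMap]; rfl) | rfl
    have h2 : Finsupp.single (0 : ℤ) (algebraMap k R c) m = 0 :=
      Finsupp.single_eq_of_ne (by omega)
    show (algebraMap k (AddMonoidAlgebra R ℤ) c).coeff m ∈ I
    rw [h1, h2]
    exact I.zero_mem

/-!
Suppose the Rees algebra is generated by finitely many Laurent polynomials, all of degree `< N`.
The elements of the Rees algebra whose coefficients in degrees `≥ N` lie in `I²` form a
subalgebra: in a product landing in degree `≥ N`, either a factor already has degree `≥ N` or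
both factors have positive degree. It contains the generators, hence `x tᴺ` for every `x ∈ I`,
so `I ≤ I²`. Evaluating at `t = 1` maps the Rees algebra onto `R`.
Conversely `R` is noetherian, so `I` is finitely generated, and the Rees algebra is generated by
`R`, `t⁻¹` and `I t`, because idempotence gives `I tⁿ = (I t)ⁿ` for `n ≥ 1`.
-/

open AddMonoidAlgebra

theorem AddMonoidAlgebra.coeff_mul_mem_of_forall {R G S : Type*} [Semiring R] [AddMonoid G]
    [SetLike S R] [AddSubmonoidClass S R] {J : S} {p q : AddMonoidAlgebra R G} {m : G}
    (h : ∀ a b, a + b = m → p.coeff a * q.coeff b ∈ J) : (p * q).coeff m ∈ J := by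
  classical
  rw [coeff_mul]
  refine sum_mem fun a _ => sum_mem fun b _ => ?_
  dsimp only
  split_ifs with hab
  · exact h a b hab
  · exact zero_mem J

theorem AddMonoidAlgebra.exists_pos_coeff_eq_zero_of_le {R : Type*} [Semiring R]
    (s : Finset (AddMonoidAlgebra R ℤ)) :
    ∃ N : ℤ, 0 < N ∧ ∀ p ∈ s, ∀ m, N ≤ m → p.coeff m = 0 := by
  obtain ⟨B, hB⟩ := (s.biUnion fun p => p.coeff.support).bddAbove
  refine ⟨max B 0 + 1, by omega, fun p hp m hm => ?_⟩
  by_contra hne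
  have : m ≤ B := hB (Finset.mem_biUnion.2 ⟨p, hp, Finsupp.mem_support_iff.2 hne⟩)
  omega

section tameRees

variable {k R : Type*} [CommSemiring k] [CommRing R] [Algebra k R] {I : Ideal R}

theorem single_mem_tameRees_iff {m : ℤ} {r : R} :
    single m r ∈ tameRees k R I ↔ (0 < m → r ∈ I) := by
  refine ⟨fun h hm => by simpa only [coeff_single, Finsupp.single_eq_same] using h m hm,
    fun h n hn => ?_⟩
  rcases eq_or_ne m n with rfl | hmn
  · simpa only [coeff_single, Finsupp.single_eq_same] using h hn
  · rw [coeff_single, Finsupp.single_eq_of_ne' hmn]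
    exact zero_mem I

theorem fg_top_of_fg_tameRees (h : (tameRees k R I).FG) : (⊤ : Subalgebra k R).FG := by
  let evalOne : AddMonoidAlgebra R ℤ →ₐ[k] R := (lift R R ℤ 1).restrictScalars k
  have hmap : (tameRees k R I).map evalOne = ⊤ :=
    eq_top_iff.2 fun r _ => ⟨single 0 r, single_mem_tameRees_iff.2 (absurd · (lt_irrefl 0)),
      show lift R R ℤ 1 (single 0 r) = r by
        rw [lift_single, MonoidHom.one_apply, smul_eq_mul, mul_one]⟩
  exact hmap ▸ h.map evalOne

variable (k R I) in
def tameReesSqFrom (N : ℤ) (hN : 0 < N) : Subalgebra k (AddMonoidAlgebra R ℤ) where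
  carrier := {p | p ∈ tameRees k R I ∧ ∀ m, N ≤ m → p.coeff m ∈ I * I}
  add_mem' hp hq := ⟨add_mem hp.1 hq.1, fun m hm => add_mem (hp.2 m hm) (hq.2 m hm)⟩
  mul_mem' {p q} hp hq := by
    refine ⟨mul_mem hp.1 hq.1, fun m hm => coeff_mul_mem_of_forall fun a b hab => ?_⟩
    rcases le_or_gt N a with ha | ha
    · exact Ideal.mul_mem_right _ _ (hp.2 a ha)
    rcases le_or_gt N b with hb | hb
    · exact Ideal.mul_mem_left _ _ (hq.2 b hb)
    exact Ideal.mul_mem_mul (hp.1 a (by omega)) (hq.1 b (by omega))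
  algebraMap_mem' c := by
    refine ⟨algebraMap_mem _ c, fun m hm => ?_⟩
    rw [coe_algebraMap, Function.comp_apply, coeff_single, Finsupp.single_eq_of_ne' (by omega)]
    exact zero_mem _

theorem mul_self_eq_of_fg_tameRees (h : (tameRees k R I).FG) : I * I = I := by
  obtain ⟨s, hs⟩ := h
  obtain ⟨N, hN, hsN⟩ := exists_pos_coeff_eq_zero_of_le s
  have hle : tameRees k R I ≤ tameReesSqFrom k R I N hN := hs ▸ Algebra.adjoin_le fun p hp =>
    ⟨hs ▸ Algebra.subset_adjoin hp, fun m hm => (hsN p hp m hm).symm ▸ zero_mem _⟩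
  refine le_antisymm Ideal.mul_le_left fun x hx => ?_
  have hxN : single N x ∈ tameReesSqFrom k R I N hN := hle (single_mem_tameRees_iff.2 fun _ => hx)
  simpa only [coeff_single, Finsupp.single_eq_same] using hxN.2 N le_rfl

section generation

variable {B : Subalgebra k (AddMonoidAlgebra R ℤ)}

theorem single_zero_mem_of_adjoin_eq_top {s : Set R} (hs : Algebra.adjoin k s = ⊤)
    (h : ∀ r ∈ s, single 0 r ∈ B) (r : R) : single 0 r ∈ B := by
  let φ : R →ₐ[k] AddMonoidAlgebra R ℤ := singleZeroAlgHom
  have hle : Algebra.adjoin k (φ '' s) ≤ B := Algebra.adjoin_le <| by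
    rintro _ ⟨x, hx, rfl⟩
    exact h x hx
  rw [Algebra.adjoin_image, hs] at hle
  exact hle ⟨r, Algebra.mem_top, rfl⟩

theorem single_mem_of_mem_span (h0 : ∀ r, single 0 r ∈ B) {m : ℤ} {s : Set R}
    (h : ∀ x ∈ s, single m x ∈ B) {x : R} (hx : x ∈ Ideal.span s) : single m x ∈ B := by
  induction hx using Submodule.span_induction with
  | mem y hy => exact h y hy
  | zero => simpa only [single_zero] using zero_mem B
  | add y z _ _ hy hz => simpa only [single_add] using add_mem hy hz
  | smul c y _ hy =>
    rw [smul_eq_mul, ← zero_add m, ← single_mul_single]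
    exact mul_mem (h0 c) hy

theorem single_neg_natCast_mem (h0 : ∀ r, single 0 r ∈ B) (hneg : single (-1) 1 ∈ B)
    (n : ℕ) (r : R) : single (-(n : ℤ)) r ∈ B := by
  have h : single (-(n : ℤ)) r = single 0 r * single (-1) 1 ^ n := by
    rw [single_pow, one_pow, single_mul_single, zero_add, mul_one, smul_neg, nsmul_one]
  exact h ▸ mul_mem (h0 r) (pow_mem hneg n)

theorem single_natCast_add_one_mem (hI : I * I = I) (h1 : ∀ x ∈ I, single 1 x ∈ B) (n : ℕ) :
    ∀ x ∈ I, single ((n : ℤ) + 1) x ∈ B := by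
  induction n with
  | zero => simpa only [Nat.cast_zero, zero_add] using h1
  | succ n ih =>
    intro x hx
    rw [← hI] at hx
    refine Submodule.mul_induction_on hx (fun a ha b hb => ?_) fun a b ha hb => ?_
    · rw [Nat.cast_succ, ← single_mul_single]
      exact mul_mem (ih a ha) (h1 b hb)
    · simpa only [single_add] using add_mem ha hb

theorem tameRees_le_of_single_mem (hI : I * I = I) (h0 : ∀ r, single 0 r ∈ B)
    (hneg : single (-1) 1 ∈ B) (h1 : ∀ x ∈ I, single 1 x ∈ B) : tameRees k R I ≤ B := by
  intro p hp
  rw [← sum_coeff_single p]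
  refine sum_mem fun m _ => ?_
  rcases lt_or_ge 0 m with hm | hm
  · obtain ⟨n, rfl⟩ : ∃ n : ℕ, m = n + 1 := ⟨(m - 1).toNat, by omega⟩
    exact single_natCast_add_one_mem hI h1 n _ (hp _ hm)
  · obtain ⟨n, rfl⟩ : ∃ n : ℕ, m = -n := ⟨(-m).toNat, by omega⟩
    exact single_neg_natCast_mem h0 hneg n _

end generation

end tameRees

theorem fg_tameRees {k R : Type*} [CommRing k] [IsNoetherianRing k] [CommRing R] [Algebra k R]
    {I : Ideal R} (hR : (⊤ : Subalgebra k R).FG) (hI : I * I = I) : (tameRees k R I).FG := by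
  have : Algebra.FiniteType k R := ⟨hR⟩
  have : IsNoetherianRing R := Algebra.FiniteType.isNoetherianRing k R
  obtain ⟨sR, hsR⟩ := hR
  obtain ⟨sI, hsI⟩ := IsNoetherian.noetherian I
  let S : Set (AddMonoidAlgebra R ℤ) := single 0 '' sR ∪ {single (-1) 1} ∪ single 1 '' sI
  have hS : S.Finite :=
    ((sR.finite_toSet.image _).union (Set.finite_singleton _)).union (sI.finite_toSet.image _)
  refine Subalgebra.fg_def.2 ⟨S, hS, le_antisymm ?_ ?_⟩
  · refine Algebra.adjoin_le ?_
    rintro _ ((⟨r, -, rfl⟩ | rfl) | ⟨x, hx, rfl⟩) <;> refine single_mem_tameRees_iff.2 fun h => ?_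
    · exact absurd h (lt_irrefl 0)
    · exact absurd h (by decide)
    · exact hsI ▸ Ideal.subset_span hx
  · have h0 : ∀ r, single 0 r ∈ Algebra.adjoin k S :=
      single_zero_mem_of_adjoin_eq_top hsR fun r hr =>
        Algebra.subset_adjoin (Or.inl (Or.inl ⟨r, hr, rfl⟩))
    refine tameRees_le_of_single_mem hI h0 (Algebra.subset_adjoin (Or.inl (Or.inr rfl))) ?_
    intro x hx
    exact single_mem_of_mem_span h0 (fun y hy => Algebra.subset_adjoin (Or.inr ⟨y, hy, rfl⟩))
      (by rwa [Ideal.span, hsI])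

/-- For a tamely filtered `k`-algebra `(R, F)` (so `F^{≥0}R = R` and
`F^{≥m}R = F^{≥1}R =: I` for `m ≥ 1`), the Rees algebra `⊕ₘ F^{≥m}R` is a finitely
generated `k`-algebra if and only if `R` is a finitely generated `k`-algebra and the ideal
`I = F^{≥1}R` is idempotent. -/
theorem stmt_4 (k R : Type*) [Field k] [CommRing R] [Algebra k R] (I : Ideal R) :
    (tameRees k R I).FG ↔ (⊤ : Subalgebra k R).FG ∧ I * I = I :=
  ⟨fun h => ⟨fg_top_of_fg_tameRees h, mul_self_eq_of_fg_tameRees h⟩,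
    fun ⟨hR, hI⟩ => fg_tameRees hR hI⟩
end

section
/- Let (R, F) be a filtered commutative k-algebra whose Rees algebra ⊕_m F^{≥m}R is a finitely generated integral domain over k. Suppose there exist elements t_1, …, t_ℓ generating the subring ⊕_{m≥0} F^{≥m}R, with positive degrees among t_1, …, t_{ℓ_0} and let I = (t_1, …, t_{ℓ_0}) be the ideal of F^{≥0}R they generate, and let d = max_i deg(t_i) > 0. Then for all m ≥ 0 one has I^m ⊆ F^{≥m}R ⊆ I^{⌊m/d⌋}, and consequently F^{∞}R := ∩_m F^{≥m}R equals ∩_m I^m; by the Krull Intersection Theorem, F^∞R is either the zero ideal or all of F^{≥0}R. -/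
/-!
A monomial `∏ tᵢ^{eᵢ}` of degree `m = ∑ eᵢ dᵢ` involves at least `m / D` factors of positive
degree, each in `I`, so `F^{≥m} ⊆ I^{⌊m/D⌋}`; conversely `I ⊆ F^{≥1}` and multiplicativity of the
filtration give `Iᵐ ⊆ F^{≥m}`. The two chains of ideals are therefore cofinal in each other and
have the same intersection, which by Krull's intersection theorem in the noetherian domain
`F^{≥0}R` is `0` unless `I` is the unit ideal.
-/

namespace Ideal

variable {A : Type*} [CommRing A]

theorem prod_mem_pow_sum {ι : Type*} {s : Finset ι} {I : Ideal A} {x : ι → A} {n : ι → ℕ}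
    (h : ∀ i ∈ s, x i ∈ I ^ n i) : ∏ i ∈ s, x i ∈ I ^ ∑ i ∈ s, n i :=
  Finset.prod_pow_eq_pow_sum s n I ▸ prod_mem_prod h

theorem pow_le_of_le_filtration {F : ℕ → Ideal A} (hF0 : F 0 = ⊤)
    (hmul : ∀ i j, F i * F j ≤ F (i + j)) {I : Ideal A} (hI : I ≤ F 1) (m : ℕ) :
    I ^ m ≤ F m := by
  induction m with
  | zero => simp [hF0]
  | succ n ih => exact (mul_mono ih hI).trans (hmul n 1)

section Monomials

variable {ι : Type*} [Fintype ι] {I : Ideal A} {t : ι → A} {d : ι → ℕ} {D : ℕ}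

theorem prod_pow_mem_pow_div (ht : ∀ i, 0 < d i → t i ∈ I) (hD : ∀ i, d i ≤ D) (e : ι → ℕ) :
    ∏ i, t i ^ e i ∈ I ^ ((∑ i, e i * d i) / D) := by
  -- only the factors of positive degree are counted
  set f : ι → ℕ := fun i => if 0 < d i then e i else 0
  have hmem : ∀ i ∈ Finset.univ, t i ^ e i ∈ I ^ f i := by
    intro i _
    by_cases hi : 0 < d i
    · simpa only [f, if_pos hi] using pow_mem_pow (ht i hi) _
    · simp only [f, if_neg hi, pow_zero, one_eq_top, Submodule.mem_top]
  have hdeg : ∑ i, e i * d i ≤ D * ∑ i, f i := by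
    rw [Finset.mul_sum]
    refine Finset.sum_le_sum fun i _ => ?_
    by_cases hi : 0 < d i
    · simpa only [f, if_pos hi, mul_comm D] using Nat.mul_le_mul_left (e i) (hD i)
    · simp [f, Nat.eq_zero_of_not_pos hi]
  exact pow_le_pow_right (Nat.div_le_of_le_mul hdeg) (prod_mem_pow_sum hmem)

theorem le_pow_div_of_eq_span_monomials {J : Ideal A} {m : ℕ}
    (hJ : J = span {x | ∃ e : ι → ℕ, ∑ i, e i * d i = m ∧ x = ∏ i, t i ^ e i})
    (ht : ∀ i, 0 < d i → t i ∈ I) (hD : ∀ i, d i ≤ D) : J ≤ I ^ (m / D) := by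
  rw [hJ, span_le]
  rintro x ⟨e, rfl, rfl⟩
  exact prod_pow_mem_pow_div ht hD e

end Monomials

theorem iInf_pow_eq_bot_or_eq_top [IsNoetherianRing A] [IsDomain A] (I : Ideal A) :
    ⨅ m : ℕ, I ^ m = ⊥ ∨ ⨅ m : ℕ, I ^ m = ⊤ := by
  by_cases hI : I = ⊤
  · simp [hI]
  · exact Or.inl (iInf_pow_eq_bot_of_isDomain I hI)

end Ideal

theorem iInf_eq_iInf_of_cofinal {α : Type*} [CompleteLattice α] {f g : ℕ → α} {D : ℕ}
    (hD : 0 < D) (hgf : ∀ m, g m ≤ f m) (hfg : ∀ m, f m ≤ g (m / D)) :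
    ⨅ m, f m = ⨅ m, g m :=
  le_antisymm
    (le_iInf fun n => (iInf_le f (n * D)).trans <| by
      simpa only [Nat.mul_div_cancel n hD] using hfg (n * D))
    (iInf_mono hgf)

theorem stmt_6_general (k A : Type*) [Field k] [CommRing A] [IsDomain A] [Algebra k A]
    (hfg : (⊤ : Subalgebra k A).FG)
    (F : ℕ → Ideal A)
    (hF0 : F 0 = ⊤)
    (hanti : ∀ m : ℕ, F (m + 1) ≤ F m)
    (hmul : ∀ i j : ℕ, F i * F j ≤ F (i + j))
    (ℓ : ℕ) (t : Fin ℓ → A) (d : Fin ℓ → ℕ)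
    (ht : ∀ i, t i ∈ F (d i))
    (hgen : ∀ m : ℕ, 0 < m →
      F m = Ideal.span
        {x : A | ∃ e : Fin ℓ → ℕ, (∑ i, e i * d i) = m ∧ x = ∏ i, t i ^ e i})
    (I : Ideal A) (hI : I = Ideal.span {x : A | ∃ i, 0 < d i ∧ x = t i})
    (D : ℕ) (hD : ∀ i, d i ≤ D) (hDpos : 0 < D) :
    (∀ m : ℕ, I ^ m ≤ F m ∧ F m ≤ I ^ (m / D)) ∧
      (⨅ m : ℕ, F m) = (⨅ m : ℕ, I ^ m) ∧
      ((⨅ m : ℕ, F m) = ⊥ ∨ (⨅ m : ℕ, F m) = ⊤) := by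
  have : Algebra.FiniteType k A := ⟨hfg⟩
  have : IsNoetherianRing A := Algebra.FiniteType.isNoetherianRing k A
  have htI : ∀ i, 0 < d i → t i ∈ I := fun i hi => hI ▸ Ideal.subset_span ⟨i, hi, rfl⟩
  have hIF1 : I ≤ F 1 := by
    rw [hI, Ideal.span_le]
    rintro x ⟨i, hi, rfl⟩
    exact antitone_nat_of_succ_le hanti hi (ht i)
  have hlower := Ideal.pow_le_of_le_filtration hF0 hmul hIF1
  have hupper : ∀ m, F m ≤ I ^ (m / D) := by
    intro m
    rcases Nat.eq_zero_or_pos m with rfl | hm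
    · simp
    · exact Ideal.le_pow_div_of_eq_span_monomials (hgen m hm) htI hD
  have hinf := iInf_eq_iInf_of_cofinal hDpos hlower hupper
  exact ⟨fun m => ⟨hlower m, hupper m⟩, hinf, hinf ▸ I.iInf_pow_eq_bot_or_eq_top⟩

/-- Let `(R, F)` be a filtered commutative `k`-algebra whose Rees algebra is a
finitely generated integral domain over `k`.  We work inside the degree-zero part
`A = F^{≥0}R` (an integral domain, finitely generated over `k`), where each `F^{≥m}R`
(`m ≥ 0`) is an ideal of `A`.  Suppose `t₁, …, t_ℓ ∈ A` are homogeneous generators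
(`tᵢ ∈ F^{≥ dᵢ}` with `dᵢ ≥ 0`) of the nonnegatively graded part, so that for `m > 0`,
`F^{≥m}` is generated by the monomials `∏ tᵢ^{eᵢ}` with `∑ eᵢ dᵢ = m`; let
`I = (tᵢ : dᵢ > 0)` and `D = maxᵢ dᵢ > 0`.  Then for all `m ≥ 0`,
`Iᵐ ⊆ F^{≥m} ⊆ I^{⌊m/D⌋}`; consequently `F^∞ = ∩ₘ F^{≥m} = ∩ₘ Iᵐ`, and by the Krull
Intersection Theorem `F^∞` is either the zero ideal or everything. -/
theorem stmt_6 (k A : Type*) [Field k] [CommRing A] [IsDomain A] [Algebra k A]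
    (hfg : (⊤ : Subalgebra k A).FG)
    (F : ℕ → Ideal A)
    (hF0 : F 0 = ⊤)
    (hanti : ∀ m : ℕ, F (m + 1) ≤ F m)
    (hmul : ∀ i j : ℕ, F i * F j ≤ F (i + j))
    (ℓ : ℕ) (t : Fin ℓ → A) (d : Fin ℓ → ℕ)
    (ht : ∀ i, t i ∈ F (d i))
    (hgen : ∀ m : ℕ, 0 < m →
      F m = Ideal.span
        {x : A | ∃ e : Fin ℓ → ℕ, (∑ i, e i * d i) = m ∧ x = ∏ i, t i ^ e i})
    (I : Ideal A) (hI : I = Ideal.span {x : A | ∃ i, 0 < d i ∧ x = t i})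
    (D : ℕ) (hD : ∀ i, d i ≤ D) (hDmax : ∃ i, d i = D) (hDpos : 0 < D) :
    (∀ m : ℕ, I ^ m ≤ F m ∧ F m ≤ I ^ (m / D)) ∧
      (⨅ m : ℕ, F m) = (⨅ m : ℕ, I ^ m) ∧
      ((⨅ m : ℕ, F m) = ⊥ ∨ (⨅ m : ℕ, F m) = ⊤) :=
  stmt_6_general k A hfg F hF0 hanti hmul ℓ t d ht hgen I hI D hD hDpos
end

section
/- Let g be a Lie algebra over a field of characteristic zero carrying an involution with (−1)-eigenspace p and (+1)-eigenspace containing h, where (e, h, f) is an sl₂-triple with e, f ∈ p. Define the Slodowy slice S_e = e + p^f where p^f = {Y ∈ p : [f,Y] = 0}. Then: (1) p = [k, e] ⊕ p^f as vector spaces, i.e., S_e is transverse at e to the tangent space [k,e] of the K-orbit through e; here k is the (+1)-eigenspace. (Equivalently: p = [k,e] + p^f and [k,e] ∩ p^f = 0.) -/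
/-!
The adjoint action makes `L` a finite-dimensional representation of the `sl₂`-triple, so it
suffices to show `V = range E ⊕ ker F` for operators `H, E, F` on a finite-dimensional space
satisfying the `sl₂` relations. Since `H` shifts `E` and `F` by `±2`, both are nilpotent.
If `w ∈ ker F ∩ range E` and `E^(k+1) w = 0`, the identity
`F E^(k+1) = E^(k+1) F - (k+1) E^k (H + k)` gives `E^k (H + k) w = 0`, so by induction on `k`
only eigenvectors `w = E u` of `H` with eigenvalue `-k` have to be excluded. By the Fitting
decomposition of `H + k + 2` we may take `u` in the generalized `(-k-2)`-eigenspace, with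
`F E u = 0`; then `E F^(r+1) = F^(r+1) E - (r+1) F^r (r - H)` kills `u`, because `-k-2` is not
a natural number. Dualizing exchanges the roles of `E` and `F` and gives `range E + ker F = V`.
Finally `θ` anticommutes with `ad e` and `ad f`, so averaging with `θ` splits this
decomposition into `θ`-eigenspaces, which on the `(-1)`-eigenspace is `p = [k, e] ⊕ p^f`.
-/

open LieModule

/-- The relations `⁅h, e⁆ = 2 e`, `⁅h, f⁆ = -2 f`, `⁅e, f⁆ = h` of an `sl₂`-triple, written as
rules for moving `H` past `E` and `F`. -/
structure IsSl2Rep {R M : Type*} [CommRing R] [AddCommGroup M] [Module R M]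
    (H E F : Module.End R M) : Prop where
  h_mul_e : H * E = E * (H + 2)
  f_mul_h : F * H = (H + 2) * F
  e_mul_f : E * F = F * E + H

lemma Module.End.dualMap_mul {R M : Type*} [CommRing R] [AddCommGroup M] [Module R M]
    (A B : Module.End R M) :
    ((A * B).dualMap : Module.End R (Module.Dual R M)) = B.dualMap * A.dualMap :=
  (LinearMap.dualMap_comp_dualMap B A).symm

lemma Module.End.mul_pow_eq_pow_mul_add {R M : Type*} [CommRing R] [AddCommGroup M]
    [Module R M] {A X : Module.End R M} {c : R} (h : A * X = X * (A + algebraMap R _ c))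
    (n : ℕ) : A * X ^ n = X ^ n * (A + algebraMap R _ (n * c)) := by
  induction n with
  | zero => simp
  | succ n ih =>
    rw [pow_succ, ← mul_assoc, ih, mul_assoc, add_mul, h, Algebra.commutes, mul_add, ← mul_assoc,
      mul_add, mul_add, ← mul_assoc, Nat.cast_succ, add_one_mul, map_add, mul_add]
    abel

lemma Module.End.isNilpotent_of_mul_eq_mul_add {K V : Type*} [Field K] [CharZero K]
    [AddCommGroup V] [Module K V] [FiniteDimensional K V] {A X : Module.End K V} {c : K}
    (hc : c ≠ 0) (h : A * X = X * (A + algebraMap K _ c)) : IsNilpotent X := by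
  by_contra hX
  let T : Module.End K (Module.End K V) := LinearMap.mulLeft K A - LinearMap.mulRight K A
  have hT : ∀ n : ℕ, T.HasEigenvalue (n * c) := fun n =>
    hasEigenvalue_of_hasEigenvector <| hasEigenvector_iff.mpr
      ⟨mem_eigenspace_iff.mpr <| by
        simp only [T, LinearMap.sub_apply, LinearMap.mulLeft_apply, LinearMap.mulRight_apply,
          mul_pow_eq_pow_mul_add h n, mul_add, Algebra.commutes, Algebra.smul_def]
        abel,
       fun h0 => hX ⟨n, h0⟩⟩
  refine Set.infinite_of_injective_forall_mem (f := fun n : ℕ => (n : K) * c) ?_ hT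
    T.finite_hasEigenvalue
  intro m n hmn
  exact_mod_cast mul_right_cancel₀ hc hmn

namespace IsSl2Rep

section CommRing

variable {R M : Type*} [CommRing R] [AddCommGroup M] [Module R M] {H E F : Module.End R M}

lemma symm (hρ : IsSl2Rep H E F) : IsSl2Rep (-H) F E where
  h_mul_e := by
    rw [show -H * F = -(F * H) + 2 * F by rw [hρ.f_mul_h]; noncomm_ring]
    noncomm_ring
  f_mul_h := by
    rw [mul_neg, show E * H = H * E - 2 * E by rw [hρ.h_mul_e]; noncomm_ring]
    noncomm_ring
  e_mul_f := by rw [hρ.e_mul_f]; abel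

lemma dualMap (hρ : IsSl2Rep H E F) : IsSl2Rep H.dualMap F.dualMap E.dualMap where
  h_mul_e := by
    rw [← Module.End.dualMap_mul, hρ.f_mul_h, Module.End.dualMap_mul]
    congr 1; ext; simp
  f_mul_h := by
    rw [← Module.End.dualMap_mul, hρ.h_mul_e, Module.End.dualMap_mul]
    congr 1; ext; simp
  e_mul_f := by
    rw [← Module.End.dualMap_mul, hρ.e_mul_f, ← Module.End.dualMap_mul]
    ext; simp

lemma h_add_mul_e (hρ : IsSl2Rep H E F) (c : ℕ) : (H + c • 1) * E = E * (H + (c + 2) • 1) := by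
  rw [add_mul, hρ.h_mul_e, smul_mul_assoc, one_mul, add_smul]
  noncomm_ring

lemma f_mul_e_pow_succ (hρ : IsSl2Rep H E F) (j : ℕ) :
    F * E ^ (j + 1) = E ^ (j + 1) * F - (j + 1) • (E ^ j * (H + j • 1)) := by
  have fe : F * E = E * F - H := by rw [hρ.e_mul_f]; abel
  induction j with
  | zero => simpa using fe
  | succ j ih =>
    rw [pow_succ, ← mul_assoc, ih, sub_mul, mul_assoc, fe, smul_mul_assoc, mul_assoc,
      hρ.h_add_mul_e, ← mul_assoc, ← pow_succ]
    simp only [mul_add, mul_sub, mul_smul_comm, mul_one, ← mul_assoc, ← pow_succ]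
    module

lemma e_mul_f_pow_succ (hρ : IsSl2Rep H E F) (j : ℕ) :
    E * F ^ (j + 1) = F ^ (j + 1) * E - (j + 1) • (F ^ j * (-H + j • 1)) :=
  hρ.symm.f_mul_e_pow_succ j

lemma commute_f_mul_e_h (hρ : IsSl2Rep H E F) : Commute (F * E) H := by
  have h2 : Commute (F * E) (H + 2) := by
    rw [Commute, SemiconjBy, mul_assoc, ← hρ.h_mul_e, ← mul_assoc, hρ.f_mul_h, mul_assoc]
  simpa using h2.sub_right (Commute.ofNat_right _ 2)

end CommRing

variable {K V : Type*} [Field K] [CharZero K] [AddCommGroup V] [Module K V]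
  [FiniteDimensional K V] {H E F : Module.End K V}

lemma isNilpotent_e (hρ : IsSl2Rep H E F) : IsNilpotent E :=
  Module.End.isNilpotent_of_mul_eq_mul_add (c := 2) two_ne_zero
    (by rw [map_ofNat]; exact hρ.h_mul_e)

lemma isNilpotent_f (hρ : IsSl2Rep H E F) : IsNilpotent F :=
  hρ.symm.isNilpotent_e

lemma eq_zero_of_f_e_apply_eq_zero (hρ : IsSl2Rep H E F) {m : ℕ} (hm : m ≠ 0) {u : V}
    (hu : (H + m • 1) u = 0) (hFE : F (E u) = 0) : u = 0 := by
  obtain ⟨N, hN⟩ := hρ.isNilpotent_f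
  suffices ∀ r, (F ^ r) u = 0 → u = 0 from this N (by rw [hN]; rfl)
  intro r
  induction r with
  | zero => simp
  | succ r ih =>
    intro hr
    apply ih
    have hHu : (-H + r • 1) u = (m + r) • u := by
      rw [LinearMap.add_apply, LinearMap.smul_apply] at hu
      simp only [LinearMap.add_apply, LinearMap.neg_apply, LinearMap.smul_apply,
        Module.End.one_apply, eq_neg_of_add_eq_zero_left hu, add_smul]
      abel
    rw [pow_succ, Module.End.mul_apply] at hr
    have key := congrArg (· u) (hρ.e_mul_f_pow_succ r)
    simp only [Module.End.mul_apply, LinearMap.sub_apply, LinearMap.smul_apply, pow_succ, hr,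
      hFE, hHu, map_zero, map_nsmul, smul_smul, zero_sub, zero_eq_neg] at key
    rw [← Nat.cast_smul_eq_nsmul K, smul_eq_zero, Nat.cast_eq_zero] at key
    exact key.resolve_left (Nat.mul_ne_zero r.succ_ne_zero (by omega))

lemma eq_zero_of_f_e_apply_eq_zero_of_pow (hρ : IsSl2Rep H E F) {m : ℕ} (hm : m ≠ 0) (n : ℕ)
    {u : V} (hu : ((H + m • 1) ^ n) u = 0) (hFE : F (E u) = 0) : u = 0 := by
  induction n generalizing u with
  | zero => simpa using hu
  | succ n ih =>
    have hcomm : Commute (F * E) (H + m • 1) :=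
      hρ.commute_f_mul_e_h.add_right ((Commute.one_right _).smul_right m)
    have hHu : (H + m • 1) u = 0 := by
      refine ih ?_ ?_
      · rwa [← Module.End.mul_apply, ← pow_succ]
      · rw [← Module.End.mul_apply, ← Module.End.mul_apply, hcomm.eq,
          Module.End.mul_apply, Module.End.mul_apply, hFE, map_zero]
    exact hρ.eq_zero_of_f_e_apply_eq_zero hm hHu hFE

lemma eq_zero_of_mem_ker_f_of_mem_range_e (hρ : IsSl2Rep H E F) {k : ℕ} {v : V}
    (hvF : F v = 0) (hvE : v ∈ LinearMap.range E) (hv : (H + k • 1) v = 0) : v = 0 := by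
  set A := H + (k + 2) • 1
  set B := H + k • 1
  obtain ⟨n, hA, hB, hn⟩ := ((LinearMap.eventually_isCompl_ker_pow_range_pow A).and
    ((LinearMap.eventually_isCompl_ker_pow_range_pow B).and (Filter.eventually_ge_atTop 1))).exists
  have hAB : SemiconjBy E (A ^ n) (B ^ n) := SemiconjBy.pow_right (hρ.h_add_mul_e k).symm n
  obtain ⟨u, rfl⟩ := hvE
  obtain ⟨u₁, hu₁, u₂, hu₂, rfl⟩ :=
    Submodule.mem_sup.mp (hA.sup_eq_top ▸ Submodule.mem_top : u ∈ _ ⊔ _)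
  have hEu₁ : E u₁ ∈ LinearMap.ker (B ^ n) := by
    rw [LinearMap.mem_ker, ← Module.End.mul_apply, ← hAB.eq, Module.End.mul_apply,
      LinearMap.mem_ker.mp hu₁, map_zero]
  have hEu₂ : E u₂ ∈ LinearMap.range (B ^ n) := by
    obtain ⟨x, rfl⟩ := hu₂
    exact ⟨E x, by rw [← Module.End.mul_apply, ← hAB.eq, Module.End.mul_apply]⟩
  have hEu : E (u₁ + u₂) ∈ LinearMap.ker (B ^ n) := by
    obtain ⟨n, rfl⟩ := Nat.exists_eq_add_of_le' hn
    rw [LinearMap.mem_ker, pow_succ, Module.End.mul_apply, hv, map_zero]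
  have hEu₂0 : E u₂ = 0 := by
    refine Submodule.disjoint_def.mp hB.disjoint _ ?_ hEu₂
    simpa [map_add] using Submodule.sub_mem _ hEu hEu₁
  rw [map_add, hEu₂0, add_zero] at hvF ⊢
  rw [hρ.eq_zero_of_f_e_apply_eq_zero_of_pow (k + 1).succ_ne_zero n (LinearMap.mem_ker.mp hu₁) hvF,
    map_zero]

lemma ker_f_inf_range_e (hρ : IsSl2Rep H E F) : LinearMap.ker F ⊓ LinearMap.range E = ⊥ := by
  have hH : ∀ w ∈ LinearMap.ker F ⊓ LinearMap.range E,
      H w ∈ LinearMap.ker F ⊓ LinearMap.range E := by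
    rintro w ⟨hwF, x, rfl⟩
    refine ⟨?_, (H + 2) x, ?_⟩
    · rw [SetLike.mem_coe, LinearMap.mem_ker, ← Module.End.mul_apply, hρ.f_mul_h,
        Module.End.mul_apply, LinearMap.mem_ker.mp hwF, map_zero]
    · rw [← Module.End.mul_apply, ← hρ.h_mul_e, Module.End.mul_apply]
  obtain ⟨N, hN⟩ := hρ.isNilpotent_e
  suffices ∀ k, ∀ w ∈ LinearMap.ker F ⊓ LinearMap.range E, (E ^ k) w = 0 → w = 0 from
    (Submodule.eq_bot_iff _).mpr fun w hw => this N w hw (by rw [hN]; rfl)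
  intro k
  induction k with
  | zero => simp
  | succ k ih =>
    intro w hw hEw
    have hwF : F w = 0 := hw.1
    have hw' : (H + k • 1) w ∈ LinearMap.ker F ⊓ LinearMap.range E := by
      rw [LinearMap.add_apply, LinearMap.smul_apply, Module.End.one_apply]
      exact add_mem (hH w hw) (nsmul_mem hw k)
    have hEw' : (E ^ k) ((H + k • 1) w) = 0 := by
      have key := congrArg (· w) (hρ.f_mul_e_pow_succ k)
      simp only [Module.End.mul_apply, LinearMap.sub_apply, LinearMap.smul_apply, hEw, hwF,
        map_zero, zero_sub, zero_eq_neg] at key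
      rw [← Nat.cast_smul_eq_nsmul K, smul_eq_zero, Nat.cast_eq_zero] at key
      exact key.resolve_left k.succ_ne_zero
    exact hρ.eq_zero_of_mem_ker_f_of_mem_range_e hwF hw.2 (ih _ hw' hEw')

lemma range_e_sup_ker_f (hρ : IsSl2Rep H E F) : LinearMap.range E ⊔ LinearMap.ker F = ⊤ := by
  rw [← Submodule.dualAnnihilator_eq_bot_iff, Submodule.dualAnnihilator_sup_eq,
    ← LinearMap.ker_dualMap_eq_dualAnnihilator_range,
    ← LinearMap.range_dualMap_eq_dualAnnihilator_ker]
  exact hρ.dualMap.ker_f_inf_range_e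

lemma isCompl_range_e_ker_f (hρ : IsSl2Rep H E F) : IsCompl (LinearMap.range E) (LinearMap.ker F) :=
  ⟨disjoint_iff.mpr (inf_comm (LinearMap.range E) _ ▸ hρ.ker_f_inf_range_e),
    codisjoint_iff.mpr hρ.range_e_sup_ker_f⟩

end IsSl2Rep

namespace IsSl2Triple

variable {R L M : Type*} [LieRing L] [AddCommGroup M] [LieRingModule L M] {h e f : L}

lemma isSl2Rep_toEnd [CommRing R] [LieAlgebra R L] [Module R M] [LieModule R L M]
    (t : IsSl2Triple h e f) : IsSl2Rep (toEnd R L M h) (toEnd R L M e) (toEnd R L M f) := by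
  have hlie : ∀ x y : L, toEnd R L M x * toEnd R L M y =
      toEnd R L M y * toEnd R L M x + toEnd R L M ⁅x, y⁆ := fun x y => by
    ext m
    simp only [Module.End.mul_apply, LinearMap.add_apply, toEnd_apply_apply]
    rw [leibniz_lie, add_comm]
  constructor
  · rw [hlie, t.lie_h_e_nsmul, map_nsmul]; noncomm_ring
  · rw [hlie, ← lie_skew, t.lie_h_f_nsmul, neg_neg, map_nsmul]; noncomm_ring
  · rw [hlie, t.lie_e_f]

lemma isCompl_range_toEnd_e_ker_toEnd_f [Field R] [CharZero R] [LieAlgebra R L] [Module R M]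
    [LieModule R L M] [FiniteDimensional R M] (t : IsSl2Triple h e f) :
    IsCompl (LinearMap.range (toEnd R L M e)) (LinearMap.ker (toEnd R L M f)) :=
  t.isSl2Rep_toEnd.isCompl_range_e_ker_f

end IsSl2Triple

lemma Module.End.map_eigenspace_one_sup_eigenspace_neg_one_inf_ker {K V : Type*} [Field K]
    [NeZero (2 : K)] [AddCommGroup V] [Module K V] {θ E F : Module.End K V}
    (hθ : ∀ x, θ (θ x) = x) (hθE : ∀ x, θ (E x) = -E (θ x)) (hθF : ∀ x, θ (F x) = -F (θ x))
    (hEF : LinearMap.range E ⊔ LinearMap.ker F = ⊤) :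
    (θ.eigenspace 1).map E ⊔ (θ.eigenspace (-1) ⊓ LinearMap.ker F) = θ.eigenspace (-1) := by
  simp only [le_antisymm_iff, sup_le_iff, inf_le_left, and_true]
  refine ⟨?_, fun v hv => ?_⟩
  · rintro _ ⟨x, hx, rfl⟩
    rw [SetLike.mem_coe, mem_eigenspace_iff, one_smul] at hx
    rw [mem_eigenspace_iff, hθE, hx, neg_one_smul]
  rw [mem_eigenspace_iff, neg_one_smul] at hv
  obtain ⟨_, ⟨x, rfl⟩, y, hy, hxy⟩ := Submodule.mem_sup.mp (hEF ▸ Submodule.mem_top : v ∈ _ ⊔ _)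
  rw [LinearMap.mem_ker] at hy
  refine Submodule.mem_sup.mpr ⟨E ((2⁻¹ : K) • (x + θ x)), ⟨_, ?_, rfl⟩,
    (2⁻¹ : K) • (y - θ y), ⟨?_, ?_⟩, ?_⟩
  · rw [SetLike.mem_coe, mem_eigenspace_iff, map_smul, map_add, hθ, add_comm, one_smul]
  · rw [SetLike.mem_coe, mem_eigenspace_iff, map_smul, map_sub, hθ, neg_one_smul, ← smul_neg,
      neg_sub]
  · have hFθy : F (θ y) = 0 := by rw [← neg_eq_zero, ← hθF, hy, map_zero]
    rw [SetLike.mem_coe, LinearMap.mem_ker, map_smul, map_sub, hy, hFθy, sub_zero, smul_zero]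
  · have hv' : E (θ x) - θ y = v := by
      have := congrArg θ hxy
      rw [map_add, hθE, hv] at this
      rw [← neg_inj, ← this]
      abel
    have h2v : E x + E (θ x) + (y - θ y) = (2 : K) • v := by
      linear_combination (norm := module) hxy + hv'
    rw [map_smul, map_add, ← smul_add, h2v, inv_smul_smul₀ two_ne_zero]

theorem stmt_10_general (K : Type*) [Field K] [CharZero K]
    (L : Type*) [LieRing L] [LieAlgebra K L] [Module.Finite K L]
    (θ : L →ₗ⁅K⁆ L) (hinv : ∀ x, θ (θ x) = x)
    (h e f : L) (t : IsSl2Triple h e f)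
    (he : θ e = -e) (hf : θ f = -f) :
    let kSub : Submodule K L := Module.End.eigenspace (θ : L →ₗ[K] L) 1
    let pSub : Submodule K L := Module.End.eigenspace (θ : L →ₗ[K] L) (-1)
    let pf : Submodule K L := pSub ⊓ LinearMap.ker ((LieAlgebra.ad K L) f)
    let bracketKE : Submodule K L := Submodule.map ((LieAlgebra.ad K L) e) kSub
    bracketKE ⊔ pf = pSub ∧ bracketKE ⊓ pf = ⊥ := by
  intro kSub pSub pf bracketKE
  have hcompl : IsCompl (LinearMap.range (LieAlgebra.ad K L e))
      (LinearMap.ker (LieAlgebra.ad K L f)) :=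
    t.isCompl_range_toEnd_e_ker_toEnd_f
  have hθ_ad : ∀ y, θ y = -y → ∀ x, θ (LieAlgebra.ad K L y x) = -LieAlgebra.ad K L y (θ x) :=
    fun y hy x => by rw [LieAlgebra.ad_apply, LieHom.map_lie, hy, neg_lie, LieAlgebra.ad_apply]
  exact ⟨Module.End.map_eigenspace_one_sup_eigenspace_neg_one_inf_ker hinv (hθ_ad e he)
    (hθ_ad f hf) hcompl.sup_eq_top,
    (hcompl.disjoint.mono LinearMap.map_le_range inf_le_right).eq_bot⟩

/-- Let `L` be a finite-dimensional Lie algebra over a field of characteristic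
zero with an involution `θ`, with `(+1)`-eigenspace `k` and `(−1)`-eigenspace `p`.  Let
`(e, h, f)` be an `sl₂`-triple with `h ∈ k` and `e, f ∈ p`.  Then `p = [k, e] ⊕ p^f`:
the sum of the image `⁅k, e⁆` and the centralizer `p^f = p ∩ ker(ad f)` is all of `p`,
and their intersection is zero. -/
theorem stmt_10 (K : Type*) [Field K] [CharZero K]
    (L : Type*) [LieRing L] [LieAlgebra K L] [Module.Finite K L]
    (θ : L →ₗ⁅K⁆ L) (hinv : ∀ x, θ (θ x) = x)
    (h e f : L) (t : IsSl2Triple h e f)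
    (hh : θ h = h) (he : θ e = -e) (hf : θ f = -f) :
    let kSub : Submodule K L := Module.End.eigenspace (θ : L →ₗ[K] L) 1
    let pSub : Submodule K L := Module.End.eigenspace (θ : L →ₗ[K] L) (-1)
    let pf : Submodule K L := pSub ⊓ LinearMap.ker ((LieAlgebra.ad K L) f)
    let bracketKE : Submodule K L := Submodule.map ((LieAlgebra.ad K L) e) kSub
    bracketKE ⊔ pf = pSub ∧ bracketKE ⊓ pf = ⊥ :=
  stmt_10_general K L θ hinv h e f t he hf
end
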